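/- arXiv:2208.13890 — 2 statements merged into one kernel-verified Lean document; each statement's English description precedes it below -/
import Mathlib

section
/- Every compact metric tree can be obtained as the Gromov-Hausdorff limit of a sequence of finite metric trees. -/
open Metric Set Filter GromovHausdorff

/-- A Jordan curve: a subset homeomorphic to the circle. -/
def IsJordanCurve {X : Type} [TopologicalSpace X] (J : Set X) : Prop :=
  Nonempty (AddCircle (1 : ℝ) ≃ₜ J)

/-- A set is cyclicly connected if every pair of its points lies on a Jordan curve in it. -/
def CyclicallyConnected {X : Type} [TopologicalSpace X] (C : Set X) : Prop :=
  ∀ x ∈ C, ∀ y ∈ C, ∃ J : Set X, J ⊆ C ∧ IsJordanCurve J ∧ x ∈ J ∧ y ∈ J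

/-- A maximal cyclic subset: non-degenerate, cyclicly connected, and not a proper subset
of any cyclicly connected subset. -/
def MaximalCyclic {X : Type} [TopologicalSpace X] (T : Set X) : Prop :=
  ¬ T.Subsingleton ∧ CyclicallyConnected T ∧
    ∀ C : Set X, CyclicallyConnected C → T ⊆ C → C = T

/-- A geodesic from `x` to `y`: an isometric parametrization of `[0, dist x y]`. -/
def IsGeodesic {X : Type} [MetricSpace X] (x y : X) (f : ℝ → X) : Prop :=
  f 0 = x ∧ f (dist x y) = y ∧
    ∀ s ∈ Set.Icc 0 (dist x y), ∀ t ∈ Set.Icc 0 (dist x y), dist (f s) (f t) = |s - t|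

/-- A geodesic metric space. -/
def IsGeodesicSpace (X : Type) [MetricSpace X] : Prop :=
  ∀ x y : X, ∃ f : ℝ → X, IsGeodesic x y f

/-- A metric tree: a geodesic space containing no Jordan curve. -/
def IsMetricTree (X : Type) [MetricSpace X] : Prop :=
  IsGeodesicSpace X ∧ ∀ J : Set X, ¬ IsJordanCurve J

/-- A finite metric tree: a metric tree which is a finite union of geodesic segments
(edges isometric to intervals). -/
def IsFiniteMetricTree (X : Type) [MetricSpace X] : Prop :=
  IsMetricTree X ∧ ∃ (n : ℕ) (E : Fin n → Set X), (⋃ i, E i) = Set.univ ∧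
    ∀ i, ∃ (x y : X) (f : ℝ → X), IsGeodesic x y f ∧ E i = f '' Set.Icc 0 (dist x y)

section Aux
variable {X : Type} [MetricSpace X]

lemma IsGeodesic.param {x y : X} {f : ℝ → X} (h : IsGeodesic x y f) {t : ℝ}
    (ht : t ∈ Icc 0 (dist x y)) : dist x (f t) = t := by
  have h0 : (0:ℝ) ∈ Icc 0 (dist x y) := ⟨le_refl 0, dist_nonneg⟩
  have := h.2.2 0 h0 t ht
  rw [h.1] at this
  rw [this, abs_of_nonpos (by linarith [ht.1]), neg_sub, sub_zero]

lemma IsGeodesic.injOn {x y : X} {f : ℝ → X} (h : IsGeodesic x y f) :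
    InjOn f (Icc 0 (dist x y)) := by
  intro s hs t ht hst
  have := h.2.2 s hs t ht
  rw [hst, dist_self] at this
  have h2 : s - t = 0 := abs_eq_zero.mp this.symm
  linarith

lemma IsGeodesic.continuousOn {x y : X} {f : ℝ → X} (h : IsGeodesic x y f) :
    ContinuousOn f (Icc 0 (dist x y)) := by
  apply LipschitzOnWith.continuousOn (K := 1)
  apply LipschitzOnWith.of_dist_le_mul
  intro s hs t ht
  rw [h.2.2 s hs t ht, NNReal.coe_one, one_mul, Real.dist_eq]

lemma clamp_mem {d t : ℝ} (hd : 0 ≤ d) : max 0 (min t d) ∈ Icc 0 d :=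
  ⟨le_max_left _ _, max_le hd (min_le_right _ _)⟩

lemma clamp_eq_self {d t : ℝ} (ht : t ∈ Icc 0 d) : max 0 (min t d) = t := by
  rw [min_eq_left ht.2, max_eq_right ht.1]

lemma exists_nice_geodesic (hX : IsGeodesicSpace X) (x y : X) :
    ∃ f : ℝ → X, IsGeodesic x y f ∧ Continuous f ∧
      ∀ t : ℝ, f t = f (max 0 (min t (dist x y))) := by
  obtain ⟨g, hg⟩ := hX x y
  set d := dist x y with hd
  have hd0 : 0 ≤ d := dist_nonneg
  set f : ℝ → X := fun t => g (max 0 (min t d)) with hf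
  have hcl : Continuous fun t : ℝ => max 0 (min t d) :=
    continuous_const.max (continuous_id.min continuous_const)
  have hmem : ∀ t : ℝ, max 0 (min t d) ∈ Icc 0 d := fun t => clamp_mem hd0
  refine ⟨f, ⟨?_, ?_, ?_⟩, ?_, ?_⟩
  · show g (max 0 (min 0 d)) = x
    rw [clamp_eq_self ⟨le_refl 0, hd0⟩]; exact hg.1
  · show g (max 0 (min d d)) = y
    rw [clamp_eq_self ⟨hd0, le_refl d⟩]; exact hg.2.1
  · intro s hs t ht
    show dist (g (max 0 (min s d))) (g (max 0 (min t d))) = _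
    rw [clamp_eq_self hs, clamp_eq_self ht]
    exact hg.2.2 s hs t ht
  · exact hg.continuousOn.comp_continuous hcl hmem
  · intro t
    show g _ = g _
    rw [clamp_eq_self (hmem t)]
end Aux

section Jordan
variable {X : Type} [MetricSpace X]

lemma jordan_of_arcs {α β : ℝ → X} (hαc : Continuous α) (hβc : Continuous β)
    (hαi : InjOn α (Icc 0 1)) (hβi : InjOn β (Icc 0 1))
    (h0 : α 0 = β 0) (h1 : α 1 = β 1) (hne : α 0 ≠ α 1)
    (hcross : ∀ s ∈ Icc (0:ℝ) 1, ∀ t ∈ Icc (0:ℝ) 1, α s = β t →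
      (s = 0 ∧ t = 0) ∨ (s = 1 ∧ t = 1)) :
    IsJordanCurve (α '' Icc 0 1 ∪ β '' Icc 0 1) := by
  haveI : Fact ((0:ℝ) < 1) := ⟨one_pos⟩
  set J : Set X := α '' Icc 0 1 ∪ β '' Icc 0 1 with hJ
  set f : ℝ → X := fun t => if t ≤ 1/2 then α (2*t) else β (2 - 2*t) with hf
  have hfc : Continuous f := by
    apply Continuous.if_le (hαc.comp (by continuity)) (hβc.comp (by continuity))
      continuous_id continuous_const
    intro x hx
    simp only [id] at hx
    subst hx
    norm_num [h1]
  have hf0 : f 0 = α 0 := by simp [hf]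
  have hf1 : f 1 = α 0 := by norm_num [hf, h0.symm]
  -- f is injective on Ico 0 1
  have hfinj : InjOn f (Ico 0 1) := by
    intro s hs t ht hst
    simp only [hf] at hst
    by_cases hs2 : s ≤ 1/2 <;> by_cases ht2 : t ≤ 1/2
    · rw [if_pos hs2, if_pos ht2] at hst
      have := hαi ⟨by linarith [hs.1], by linarith⟩ ⟨by linarith [ht.1], by linarith⟩ hst
      linarith
    · rw [if_pos hs2, if_neg ht2] at hst
      push_neg at ht2
      rcases hcross (2*s) ⟨by linarith [hs.1], by linarith⟩ (2 - 2*t)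
        ⟨by linarith [ht.2], by linarith⟩ hst with ⟨-, h⟩ | ⟨-, h⟩
      · exfalso; have := ht.2; linarith
      · exfalso; linarith
    · rw [if_neg hs2, if_pos ht2] at hst
      push_neg at hs2
      rcases hcross (2*t) ⟨by linarith [ht.1], by linarith⟩ (2 - 2*s)
        ⟨by linarith [hs.2], by linarith⟩ hst.symm with ⟨-, h⟩ | ⟨-, h⟩
      · exfalso; have := hs.2; linarith
      · exfalso; linarith
    · rw [if_neg hs2, if_neg ht2] at hst
      push_neg at hs2 ht2
      have := hβi ⟨by linarith [hs.2], by linarith⟩ ⟨by linarith [ht.2], by linarith⟩ hst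
      linarith
  have hfmem : ∀ t ∈ Icc (0:ℝ) 1, f t ∈ J := by
    intro t ht
    by_cases ht2 : t ≤ 1/2
    · left; exact ⟨2*t, ⟨by linarith [ht.1], by linarith⟩, by simp only [hf]; rw [if_pos ht2]⟩
    · right; push_neg at ht2
      exact ⟨2 - 2*t, ⟨by linarith [ht.2], by linarith⟩, by simp only [hf]; rw [if_neg (not_le.mpr ht2)]⟩
  have hfsurj : ∀ z ∈ J, ∃ t ∈ Ico (0:ℝ) 1, f t = z := by
    rintro z (⟨s, hs, rfl⟩ | ⟨s, hs, rfl⟩)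
    · refine ⟨s/2, ⟨by linarith [hs.1], by linarith [hs.2]⟩, ?_⟩
      have : s/2 ≤ 1/2 := by linarith [hs.2]
      simp only [hf]; rw [if_pos this]
      congr 1; ring
    · rcases eq_or_lt_of_le hs.1 with h0s | h0s
      · refine ⟨0, ⟨le_refl 0, one_pos⟩, ?_⟩
        rw [hf0, h0, ← h0s]
      · rcases eq_or_lt_of_le hs.2 with h1s | h1s
        · refine ⟨1/2, ⟨by norm_num, by norm_num⟩, ?_⟩
          simp only [hf]; rw [if_pos (le_refl (1/2 : ℝ))]
          norm_num [h1, h1s]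
        · refine ⟨1 - s/2, ⟨by linarith, by linarith⟩, ?_⟩
          have : ¬ (1 - s/2 ≤ 1/2) := by intro h; linarith
          simp only [hf]; rw [if_neg this]
          congr 1; ring
  set F : AddCircle (1:ℝ) → X := AddCircle.liftIco 1 0 f with hF
  have hFc : Continuous F := by
    apply AddCircle.liftIco_zero_continuous
    · rw [hf0, hf1]
    · exact hfc.continuousOn
  have hrep : ∀ x : AddCircle (1:ℝ), ∃ t : ℝ, t ∈ Ico (0:ℝ) 1 ∧ ((t : ℝ) : AddCircle (1:ℝ)) = x := by
    intro x
    refine ⟨(AddCircle.equivIco 1 0 x : ℝ), by simpa using (AddCircle.equivIco 1 0 x).2, ?_⟩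
    exact (AddCircle.equivIco 1 0).symm_apply_apply x
  have hFcoe : ∀ t ∈ Ico (0:ℝ) 1, F ((t : ℝ) : AddCircle (1:ℝ)) = f t := fun t ht =>
    AddCircle.liftIco_zero_coe_apply ht
  have hFinj : Function.Injective F := by
    intro x y hxy
    obtain ⟨s, hs, rfl⟩ := hrep x
    obtain ⟨t, ht, rfl⟩ := hrep y
    rw [hFcoe s hs, hFcoe t ht] at hxy
    rw [hfinj hs ht hxy]
  have hFmem : ∀ x, F x ∈ J := by
    intro x
    obtain ⟨s, hs, rfl⟩ := hrep x
    rw [hFcoe s hs]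
    exact hfmem s ⟨hs.1, hs.2.le⟩
  set e : AddCircle (1:ℝ) → J := fun x => ⟨F x, hFmem x⟩ with he
  have hbij : Function.Bijective e := by
    constructor
    · intro x y hxy
      exact hFinj (congrArg Subtype.val hxy)
    · rintro ⟨z, hz⟩
      obtain ⟨t, ht, hft⟩ := hfsurj z hz
      exact ⟨((t:ℝ) : AddCircle (1:ℝ)), Subtype.ext (by simp only [he]; rw [hFcoe t ht, hft])⟩
  exact ⟨Continuous.homeoOfEquivCompactToT2 (f := Equiv.ofBijective e hbij)
    (hFc.subtype_mk _)⟩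
end Jordan

section Arc
variable {X : Type} [MetricSpace X]

lemma geo_pin {p a b : X} {f g : ℝ → X} (hf : IsGeodesic p a f) (hg : IsGeodesic p b g)
    {s t : ℝ} (hs : s ∈ Icc 0 (dist p a)) (ht : t ∈ Icc 0 (dist p b)) (h : f s = g t) :
    s = t := by
  rw [← hf.param hs, ← hg.param ht, h]

lemma exists_arc_single {x y : X} {e : ℝ → X} (he : IsGeodesic x y e) (hec : Continuous e)
    {t1 t2 : ℝ} (h1 : t1 ∈ Icc 0 (dist x y)) (h2 : t2 ∈ Icc 0 (dist x y)) (hne : t1 ≠ t2) :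
    ∃ β : ℝ → X, Continuous β ∧ β 0 = e t1 ∧ β 1 = e t2 ∧ InjOn β (Icc 0 1) ∧
      β '' Icc 0 1 ⊆ e '' Icc 0 (dist x y) := by
  have hmem : ∀ s ∈ Icc (0:ℝ) 1, t1 + s * (t2 - t1) ∈ Icc 0 (dist x y) := by
    intro s hs
    constructor
    · nlinarith [h1.1, h2.1, hs.1, hs.2]
    · nlinarith [h1.2, h2.2, hs.1, hs.2]
  refine ⟨fun s => e (t1 + s * (t2 - t1)), hec.comp (by continuity), by norm_num,
    by norm_num, ?_, ?_⟩
  · intro s hs t ht hst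
    have := he.injOn (hmem s hs) (hmem t ht) hst
    have h3 : t2 - t1 ≠ 0 := sub_ne_zero.mpr (Ne.symm hne)
    have h4 : s * (t2 - t1) = t * (t2 - t1) := by linarith
    exact mul_right_cancel₀ h3 h4
  · rintro z ⟨s, hs, rfl⟩
    exact ⟨t1 + s * (t2 - t1), hmem s hs, rfl⟩

lemma exists_arc_mixed {p a b : X} {f g : ℝ → X} (hf : IsGeodesic p a f)
    (hg : IsGeodesic p b g) (hfc : Continuous f) (hgc : Continuous g)
    {t1 t2 : ℝ} (ht1 : t1 ∈ Icc 0 (dist p a)) (ht2 : t2 ∈ Icc 0 (dist p b))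
    (hne : f t1 ≠ g t2) :
    ∃ β : ℝ → X, Continuous β ∧ β 0 = f t1 ∧ β 1 = g t2 ∧ InjOn β (Icc 0 1) ∧
      β '' Icc 0 1 ⊆ f '' Icc 0 (dist p a) ∪ g '' Icc 0 (dist p b) := by
  set S : Set ℝ := {t | t ∈ Icc 0 (min t1 t2) ∧ f t = g t} with hS
  have h0S : (0:ℝ) ∈ S := ⟨⟨le_refl 0, le_min ht1.1 ht2.1⟩, hf.1.trans hg.1.symm⟩
  have hSc : IsClosed S := (isClosed_Icc).inter (isClosed_eq hfc hgc)
  have hSb : BddAbove S := ⟨min t1 t2, fun t ht => ht.1.2⟩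
  set w := sSup S with hw
  have hwS : w ∈ S := hSc.csSup_mem ⟨0, h0S⟩ hSb
  have hw0 : 0 ≤ w := le_csSup hSb h0S
  have hwt1 : w ≤ t1 := hwS.1.2.trans (min_le_left _ _)
  have hwt2 : w ≤ t2 := hwS.1.2.trans (min_le_right _ _)
  have hwA : w ∈ Icc 0 (dist p a) := ⟨hw0, hwt1.trans ht1.2⟩
  have hwB : w ∈ Icc 0 (dist p b) := ⟨hw0, hwt2.trans ht2.2⟩
  by_cases hw1 : w = t1
  · -- f t1 = g w, use a single arc on g
    have hq : g w = f t1 := by rw [← hwS.2, hw1]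
    have hwne : w ≠ t2 := by
      intro h
      exact hne (by rw [← hq, h])
    obtain ⟨β, hc, h0, h1, hi, him⟩ := exists_arc_single hg hgc hwB ht2 hwne
    exact ⟨β, hc, by rw [h0, hq], h1, hi, him.trans subset_union_right⟩
  by_cases hw2 : w = t2
  · have hr : f w = g t2 := by rw [hwS.2, hw2]
    have hwne : t1 ≠ w := fun h => hne (by rw [h, hr])
    obtain ⟨β, hc, h0, h1, hi, him⟩ := exists_arc_single hf hfc ht1 hwA hwne
    exact ⟨β, hc, h0, by rw [h1, hr], hi, him.trans subset_union_left⟩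
  have hlt1 : w < t1 := lt_of_le_of_ne hwt1 hw1
  have hlt2 : w < t2 := lt_of_le_of_ne hwt2 hw2
  set u : ℝ → ℝ := fun s => t1 + 2*s*(w - t1) with hu
  set v : ℝ → ℝ := fun s => w + (2*s - 1)*(t2 - w) with hv
  have humem : ∀ s ∈ Icc (0:ℝ) 1, s ≤ 1/2 → u s ∈ Icc w t1 := by
    intro s hs hs2
    simp only [hu]
    constructor
    · have := mul_nonneg (by linarith : (0:ℝ) ≤ 1 - 2*s) (by linarith : (0:ℝ) ≤ t1 - w)
      nlinarith
    · have := mul_nonneg (by linarith [hs.1] : (0:ℝ) ≤ 2*s) (by linarith : (0:ℝ) ≤ t1 - w)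
      nlinarith
  have hvmem : ∀ s ∈ Icc (0:ℝ) 1, 1/2 < s → v s ∈ Ioc w t2 := by
    intro s hs hs2
    simp only [hv]
    constructor
    · have := mul_pos (by linarith : (0:ℝ) < 2*s - 1) (by linarith : (0:ℝ) < t2 - w)
      nlinarith
    · have := mul_nonneg (by linarith [hs.2] : (0:ℝ) ≤ 2 - 2*s) (by linarith : (0:ℝ) ≤ t2 - w)
      nlinarith
  have huA : ∀ s ∈ Icc (0:ℝ) 1, s ≤ 1/2 → u s ∈ Icc 0 (dist p a) := fun s hs hs2 =>
    ⟨hw0.trans (humem s hs hs2).1, (humem s hs hs2).2.trans ht1.2⟩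
  have hvB : ∀ s ∈ Icc (0:ℝ) 1, 1/2 < s → v s ∈ Icc 0 (dist p b) := fun s hs hs2 =>
    ⟨hw0.trans (hvmem s hs hs2).1.le, (hvmem s hs hs2).2.trans ht2.2⟩
  set β : ℝ → X := fun s => if s ≤ 1/2 then f (u s) else g (v s) with hβ
  have hβc : Continuous β := by
    have hcu : Continuous u := by
      simp only [hu]; fun_prop
    have hcv : Continuous v := by
      simp only [hv]; fun_prop
    apply Continuous.if_le (hfc.comp hcu) (hgc.comp hcv)
      continuous_id continuous_const
    intro x hx
    simp only [id] at hx
    subst hx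
    have e1 : u (1/2 : ℝ) = w := by simp only [hu]; ring
    have e2 : v (1/2 : ℝ) = w := by simp only [hv]; ring
    show f (u (1/2 : ℝ)) = g (v (1/2 : ℝ))
    rw [e1, e2]
    exact hwS.2
  have hβ0 : β 0 = f t1 := by
    simp only [hβ]; rw [if_pos (by norm_num : (0:ℝ) ≤ 1/2)]
    congr 1; simp only [hu]; ring
  have hβ1 : β 1 = g t2 := by
    simp only [hβ]; rw [if_neg (by norm_num : ¬ (1:ℝ) ≤ 1/2)]
    congr 1; simp only [hv]; ring
  refine ⟨β, hβc, hβ0, hβ1, ?_, ?_⟩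
  · intro s hs t ht hst
    simp only [hβ] at hst
    by_cases hs2 : s ≤ 1/2 <;> by_cases ht2 : t ≤ 1/2
    · rw [if_pos hs2, if_pos ht2] at hst
      have := hf.injOn (huA s hs hs2) (huA t ht ht2) hst
      have h3 : w - t1 ≠ 0 := ne_of_lt (by linarith)
      have h4 : (2*s) * (w - t1) = (2*t) * (w - t1) := by
        simp only [hu] at this; linarith
      have := mul_right_cancel₀ h3 h4
      linarith
    · exfalso
      rw [if_pos hs2, if_neg ht2] at hst
      push_neg at ht2
      have hpin := geo_pin hf hg (huA s hs hs2) (hvB t ht ht2) hst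
      have husS : u s ∈ S := by
        refine ⟨⟨(huA s hs hs2).1, le_min (humem s hs hs2).2 ?_⟩, ?_⟩
        · rw [hpin]; exact (hvmem t ht ht2).2
        · rw [hst, hpin]
      have := le_csSup hSb husS
      have := (hvmem t ht ht2).1
      rw [← hpin] at this
      linarith
    · exfalso
      rw [if_neg hs2, if_pos ht2] at hst
      push_neg at hs2
      have hpin := geo_pin hf hg (huA t ht ht2) (hvB s hs hs2) hst.symm
      have husS : u t ∈ S := by
        refine ⟨⟨(huA t ht ht2).1, le_min (humem t ht ht2).2 ?_⟩, ?_⟩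
        · rw [hpin]; exact (hvmem s hs hs2).2
        · rw [hst.symm, hpin]
      have := le_csSup hSb husS
      have := (hvmem s hs hs2).1
      rw [← hpin] at this
      linarith
    · rw [if_neg hs2, if_neg ht2] at hst
      push_neg at hs2 ht2
      have := hg.injOn (hvB s hs hs2) (hvB t ht ht2) hst
      have h3 : t2 - w ≠ 0 := (ne_of_lt (by linarith)).symm
      have h4 : (2*s - 1) * (t2 - w) = (2*t - 1) * (t2 - w) := by
        simp only [hv] at this; linarith
      have := mul_right_cancel₀ h3 h4
      linarith
  · rintro z ⟨s, hs, rfl⟩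
    simp only [hβ]
    by_cases hs2 : s ≤ 1/2
    · rw [if_pos hs2]; exact Or.inl ⟨u s, huA s hs hs2, rfl⟩
    · rw [if_neg hs2]; push_neg at hs2; exact Or.inr ⟨v s, hvB s hs hs2, rfl⟩

lemma exists_arc {p a b : X} {f g : ℝ → X} (hf : IsGeodesic p a f)
    (hg : IsGeodesic p b g) (hfc : Continuous f) (hgc : Continuous g) {q r : X}
    (hq : q ∈ f '' Icc 0 (dist p a) ∪ g '' Icc 0 (dist p b))
    (hr : r ∈ f '' Icc 0 (dist p a) ∪ g '' Icc 0 (dist p b)) (hqr : q ≠ r) :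
    ∃ β : ℝ → X, Continuous β ∧ β 0 = q ∧ β 1 = r ∧ InjOn β (Icc 0 1) ∧
      β '' Icc 0 1 ⊆ f '' Icc 0 (dist p a) ∪ g '' Icc 0 (dist p b) := by
  rcases hq with ⟨t1, ht1, rfl⟩ | ⟨t1, ht1, rfl⟩ <;>
    rcases hr with ⟨t2, ht2, rfl⟩ | ⟨t2, ht2, rfl⟩
  · obtain ⟨β, hc, h0, h1, hi, him⟩ :=
      exists_arc_single hf hfc ht1 ht2 (fun h => hqr (by rw [h]))
    exact ⟨β, hc, h0, h1, hi, him.trans subset_union_left⟩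
  · exact exists_arc_mixed hf hg hfc hgc ht1 ht2 hqr
  · obtain ⟨β, hc, h0, h1, hi, him⟩ := exists_arc_mixed hg hf hgc hfc ht1 ht2 hqr
    refine ⟨β, hc, h0, h1, hi, ?_⟩
    rw [Set.union_comm]
    exact him
  · obtain ⟨β, hc, h0, h1, hi, him⟩ :=
      exists_arc_single hg hgc ht1 ht2 (fun h => hqr (by rw [h]))
    exact ⟨β, hc, h0, h1, hi, him.trans subset_union_right⟩

end Arc

section YLemma
variable {X : Type} [MetricSpace X]

lemma geodesic_subset (hJ : ∀ J : Set X, ¬ IsJordanCurve J)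
    {p a b : X} {f g h : ℝ → X} (hf : IsGeodesic p a f) (hg : IsGeodesic p b g)
    (hh : IsGeodesic a b h) (hfc : Continuous f) (hgc : Continuous g) (hhc : Continuous h) :
    ∀ s ∈ Icc 0 (dist a b), h s ∈ f '' Icc 0 (dist p a) ∪ g '' Icc 0 (dist p b) := by
  by_contra hcon
  push_neg at hcon
  obtain ⟨s0, hs0, hs0K⟩ := hcon
  set K : Set X := f '' Icc 0 (dist p a) ∪ g '' Icc 0 (dist p b) with hK
  have hKc : IsClosed K :=
    ((isCompact_Icc.image hfc).union (isCompact_Icc.image hgc)).isClosed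
  set C := dist a b with hC
  have haK : a ∈ K := Or.inl ⟨dist p a, ⟨dist_nonneg, le_refl _⟩, hf.2.1⟩
  have hbK : b ∈ K := Or.inr ⟨dist p b, ⟨dist_nonneg, le_refl _⟩, hg.2.1⟩
  set U : Set ℝ := {s | s ∈ Icc 0 s0 ∧ h s ∈ K} with hU
  have hUc : IsClosed U := isClosed_Icc.inter (hKc.preimage hhc)
  have h0U : (0:ℝ) ∈ U := ⟨⟨le_refl 0, hs0.1⟩, by rw [hh.1]; exact haK⟩
  have hUb : BddAbove U := ⟨s0, fun t ht => ht.1.2⟩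
  set u := sSup U with hu
  have huU : u ∈ U := hUc.csSup_mem ⟨0, h0U⟩ hUb
  have hu0 : 0 ≤ u := le_csSup hUb h0U
  have hus0 : u ≤ s0 := huU.1.2
  have hune : u ≠ s0 := fun e => hs0K (e ▸ huU.2)
  set V : Set ℝ := {s | s ∈ Icc s0 C ∧ h s ∈ K} with hV
  have hVc : IsClosed V := isClosed_Icc.inter (hKc.preimage hhc)
  have hCV : C ∈ V := ⟨⟨hs0.2, le_refl C⟩, by rw [hh.2.1]; exact hbK⟩
  have hVb : BddBelow V := ⟨s0, fun t ht => ht.1.1⟩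
  set v := sInf V with hv
  have hvV : v ∈ V := hVc.csInf_mem ⟨C, hCV⟩ hVb
  have hs0v : s0 ≤ v := hvV.1.1
  have hvC : v ≤ C := hvV.1.2
  have hvne : v ≠ s0 := fun e => hs0K (e ▸ hvV.2)
  have huv : u < v := lt_of_le_of_lt (lt_of_le_of_ne hus0 hune).le
    (lt_of_le_of_ne hs0v (Ne.symm hvne))
  have huIcc : u ∈ Icc 0 C := ⟨hu0, hus0.trans hs0.2⟩
  have hvIcc : v ∈ Icc 0 C := ⟨hs0.1.trans hs0v, hvC⟩
  have hint : ∀ t, u < t → t < v → h t ∉ K := by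
    intro t h1 h2 htK
    rcases le_or_gt t s0 with h3 | h3
    · have : t ∈ U := ⟨⟨hu0.trans h1.le, h3⟩, htK⟩
      exact absurd (le_csSup hUb this) (not_le.mpr h1)
    · have : t ∈ V := ⟨⟨h3.le, h2.le.trans hvC⟩, htK⟩
      exact absurd (csInf_le hVb this) (not_le.mpr h2)
  have hne : h u ≠ h v := by
    intro e
    have := hh.injOn huIcc hvIcc e
    exact absurd this (ne_of_lt huv)
  obtain ⟨β, hβc, hβ0, hβ1, hβi, hβim⟩ := exists_arc hf hg hfc hgc huU.2 hvV.2 hne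
  set α : ℝ → X := fun s => h (u + s * (v - u)) with hα
  have hαmem : ∀ s ∈ Icc (0:ℝ) 1, u + s * (v - u) ∈ Icc 0 C := by
    intro s hs
    constructor
    · nlinarith [hs.1, huIcc.1]
    · nlinarith [hs.2, hs.1, hvIcc.2]
  have hαc : Continuous α := hhc.comp (by fun_prop)
  have hα0 : α 0 = h u := by simp [hα]
  have hα1 : α 1 = h v := by simp [hα]
  have hαi : InjOn α (Icc 0 1) := by
    intro s hs t ht hst
    have := hh.injOn (hαmem s hs) (hαmem t ht) hst
    have h3 : v - u ≠ 0 := (ne_of_lt (by linarith)).symm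
    have h4 : s * (v - u) = t * (v - u) := by linarith
    exact mul_right_cancel₀ h3 h4
  have hcross : ∀ s ∈ Icc (0:ℝ) 1, ∀ t ∈ Icc (0:ℝ) 1, α s = β t →
      (s = 0 ∧ t = 0) ∨ (s = 1 ∧ t = 1) := by
    intro s hs t ht hst
    rcases eq_or_lt_of_le hs.1 with h0s | h0s
    · left
      refine ⟨h0s.symm, ?_⟩
      apply hβi ht ⟨le_refl 0, zero_le_one⟩
      rw [← hst, ← h0s, hα0, hβ0]
    · rcases eq_or_lt_of_le hs.2 with h1s | h1s
      · right
        refine ⟨h1s, ?_⟩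
        apply hβi ht ⟨zero_le_one, le_refl 1⟩
        rw [← hst, h1s, hα1, hβ1]
      · exfalso
        have hin : u < u + s * (v - u) := by nlinarith
        have hout : u + s * (v - u) < v := by nlinarith
        apply hint _ hin hout
        rw [show h (u + s * (v - u)) = α s from rfl, hst]
        exact hβim ⟨t, ht, rfl⟩
  have hne01 : α 0 ≠ α 1 := by rw [hα0, hα1]; exact hne
  exact hJ _ (jordan_of_arcs hαc hβc hαi hβi (hα0.trans hβ0.symm) (hα1.trans hβ1.symm)
    hne01 hcross)

end YLemma

section Main

lemma approx_lemma (X : Type) [MetricSpace X] [Nonempty X] [CompactSpace X]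
    (hX : IsMetricTree X) {ε : ℝ} (hε : 0 < ε) :
    ∃ G : GHSpace, dist G (toGHSpace X) ≤ ε ∧
      ∃ (Y : Type) (m : MetricSpace Y), letI := m;
        ∃ (_ : Nonempty Y) (_ : CompactSpace Y), IsFiniteMetricTree Y ∧ toGHSpace Y = G := by
  classical
  -- finite ε-net
  obtain ⟨t, -, htf, htc⟩ := finite_cover_balls_of_compact (isCompact_univ : IsCompact (univ : Set X)) hε
  set l := htf.toFinset.toList with hl
  set k := l.length with hk
  set p : X := Classical.arbitrary X with hp
  set ψ : Fin (k+1) → X := Fin.cons p (fun i => l.get i) with hψ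
  have hcover : ∀ x : X, ∃ i : Fin (k+1), dist x (ψ i) < ε := by
    intro x
    have hx : x ∈ ⋃ y ∈ t, ball y ε := htc (mem_univ x)
    simp only [mem_iUnion] at hx
    obtain ⟨y, hyt, hxy⟩ := hx
    have hyl : y ∈ l := by
      rw [hl, Finset.mem_toList, Set.Finite.mem_toFinset]
      exact hyt
    obtain ⟨j, hj⟩ := List.mem_iff_get.mp hyl
    refine ⟨j.succ, ?_⟩
    rw [hψ, Fin.cons_succ, hj]
    exact mem_ball.mp hxy
  -- geodesics from p to the net points
  have hgeo : ∀ i : Fin (k+1), ∃ f : ℝ → X, IsGeodesic p (ψ i) f ∧ Continuous f ∧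
      ∀ s : ℝ, f s = f (max 0 (min s (dist p (ψ i)))) :=
    fun i => exists_nice_geodesic hX.1 p (ψ i)
  choose f hf hfc hfcl using hgeo
  set A : Fin (k+1) → ℝ := fun i => dist p (ψ i) with hA
  set E : Fin (k+1) → Set X := fun i => f i '' Icc 0 (A i) with hE
  set T : Set X := ⋃ i, E i with hT
  have hA0 : ∀ i, 0 ≤ A i := fun i => dist_nonneg
  have hTc : IsCompact T := isCompact_iUnion (fun i => isCompact_Icc.image (hfc i))
  have hpT : p ∈ T := mem_iUnion.mpr ⟨0, ⟨0, ⟨le_refl 0, hA0 0⟩, (hf 0).1⟩⟩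
  have hψT : ∀ i, ψ i ∈ T := fun i =>
    mem_iUnion.mpr ⟨i, ⟨A i, ⟨hA0 i, le_refl _⟩, (hf i).2.1⟩⟩
  haveI hYne : Nonempty T := ⟨⟨p, hpT⟩⟩
  haveI hYcs : CompactSpace T := isCompact_iff_compactSpace.mp hTc
  -- every geodesic between points of T stays in T
  have hstay : ∀ (x y : X), x ∈ T → y ∈ T → ∀ h : ℝ → X, IsGeodesic x y h → Continuous h →
      ∀ s ∈ Icc 0 (dist x y), h s ∈ T := by
    intro x y hx hy h hh hhc s hs
    obtain ⟨i, hxi⟩ := mem_iUnion.mp hx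
    obtain ⟨si, hsi, hfsi⟩ := hxi
    obtain ⟨j, hyj⟩ := mem_iUnion.mp hy
    obtain ⟨sj, hsj, hfsj⟩ := hyj
    have hdx : dist p x = si := by rw [← hfsi]; exact (hf i).param hsi
    have hdy : dist p y = sj := by rw [← hfsj]; exact (hf j).param hsj
    have hgx : IsGeodesic p x (f i) := by
      refine ⟨(hf i).1, ?_, ?_⟩
      · rw [hdx, hfsi]
      · intro s' hs' t' ht'
        rw [hdx] at hs' ht'
        exact (hf i).2.2 s' (Icc_subset_Icc_right hsi.2 hs') t' (Icc_subset_Icc_right hsi.2 ht')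
    have hgy : IsGeodesic p y (f j) := by
      refine ⟨(hf j).1, ?_, ?_⟩
      · rw [hdy, hfsj]
      · intro s' hs' t' ht'
        rw [hdy] at hs' ht'
        exact (hf j).2.2 s' (Icc_subset_Icc_right hsj.2 hs') t' (Icc_subset_Icc_right hsj.2 ht')
    have := geodesic_subset hX.2 hgx hgy hh (hfc i) (hfc j) hhc s hs
    rcases this with ⟨w, hw, hfw⟩ | ⟨w, hw, hfw⟩
    · rw [hdx] at hw
      exact mem_iUnion.mpr ⟨i, ⟨w, Icc_subset_Icc_right hsi.2 hw, hfw⟩⟩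
    · rw [hdy] at hw
      exact mem_iUnion.mpr ⟨j, ⟨w, Icc_subset_Icc_right hsj.2 hw, hfw⟩⟩
  -- T is a geodesic space
  have hYgeo : IsGeodesicSpace T := by
    intro x y
    obtain ⟨h, hh, hhc, hhcl⟩ := exists_nice_geodesic hX.1 (x : X) (y : X)
    have hall : ∀ s : ℝ, h s ∈ T := by
      intro s
      rw [hhcl s]
      exact hstay _ _ x.2 y.2 h hh hhc _ (clamp_mem dist_nonneg)
    refine ⟨fun s => ⟨h s, hall s⟩, ?_, ?_, ?_⟩
    · exact Subtype.ext hh.1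
    · apply Subtype.ext
      show h (dist x y) = (y : X)
      rw [Subtype.dist_eq]
      exact hh.2.1
    · intro s hs t ht
      rw [Subtype.dist_eq x y] at hs ht
      rw [Subtype.dist_eq]
      exact hh.2.2 s hs t ht
  -- T has no Jordan curve
  have hYnoJ : ∀ J : Set T, ¬ IsJordanCurve J := by
    rintro J ⟨e⟩
    haveI : Fact ((0:ℝ) < 1) := ⟨one_pos⟩
    haveI : CompactSpace J := e.compactSpace
    set J' : Set X := (Subtype.val : T → X) '' J with hJ'
    set e2 : J → J' := fun z => ⟨(z : T), ⟨(z : T), z.2, rfl⟩⟩ with he2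
    have hbij : Function.Bijective e2 := by
      constructor
      · intro z w hzw
        have h' : ((z : T) : X) = ((w : T) : X) := congrArg (Subtype.val : J' → X) hzw
        exact Subtype.ext (Subtype.val_injective h')
      · rintro ⟨z, ⟨y, hyJ, hyz⟩⟩
        exact ⟨⟨y, hyJ⟩, Subtype.ext hyz⟩
    have hc : Continuous e2 := ((continuous_subtype_val.comp continuous_subtype_val).subtype_mk _)
    have : IsJordanCurve J' :=
      ⟨e.trans (Continuous.homeoOfEquivCompactToT2 (f := Equiv.ofBijective e2 hbij) hc)⟩
    exact hX.2 J' this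
  -- T is a finite metric tree
  have hfin : IsFiniteMetricTree T := by
    refine ⟨⟨hYgeo, hYnoJ⟩, k+1, ?_⟩
    set pT : T := ⟨p, hpT⟩ with hpT'
    set ψT : Fin (k+1) → T := fun i => ⟨ψ i, hψT i⟩ with hψT'
    have hmemE : ∀ i (s : ℝ), f i (max 0 (min s (A i))) ∈ T := fun i s =>
      mem_iUnion.mpr ⟨i, ⟨_, clamp_mem (hA0 i), rfl⟩⟩
    set F : Fin (k+1) → ℝ → T := fun i s => ⟨f i (max 0 (min s (A i))), hmemE i s⟩ with hF
    have hdA : ∀ i, dist pT (ψT i) = A i := fun i => Subtype.dist_eq _ _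
    have hFgeo : ∀ i, IsGeodesic pT (ψT i) (F i) := by
      intro i
      refine ⟨?_, ?_, ?_⟩
      · apply Subtype.ext
        show f i (max 0 (min 0 (A i))) = p
        rw [clamp_eq_self ⟨le_refl 0, hA0 i⟩]
        exact (hf i).1
      · apply Subtype.ext
        show f i (max 0 (min (dist pT (ψT i)) (A i))) = ψ i
        rw [hdA i, clamp_eq_self ⟨hA0 i, le_refl _⟩]
        exact (hf i).2.1
      · intro s hs t ht
        rw [hdA i] at hs ht
        show dist (f i (max 0 (min s (A i)))) (f i (max 0 (min t (A i)))) = _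
        rw [clamp_eq_self hs, clamp_eq_self ht]
        exact (hf i).2.2 s hs t ht
    refine ⟨fun i => F i '' Icc 0 (A i), ?_, ?_⟩
    · apply Set.eq_univ_of_forall
      intro y
      rcases mem_iUnion.mp y.2 with ⟨i, ⟨s, hs, hfs⟩⟩
      refine mem_iUnion.mpr ⟨i, ⟨s, hs, ?_⟩⟩
      apply Subtype.ext
      show f i (max 0 (min s (A i))) = (y : X)
      rw [clamp_eq_self hs, hfs]
    · intro i
      exact ⟨pT, ψT i, F i, hFgeo i, by rw [hdA i]⟩
  -- Gromov-Hausdorff estimate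
  refine ⟨toGHSpace T, ?_, T, inferInstance, hYne, hYcs, hfin, rfl⟩
  have h1 : dist (toGHSpace T) (toGHSpace X) = ghDist T X := rfl
  rw [h1]
  have h2 : ghDist T X ≤ hausdorffDist (range (Subtype.val : T → X)) (range (id : X → X)) :=
    ghDist_le_hausdorffDist isometry_subtype_coe isometry_id
  rw [Subtype.range_coe, range_id] at h2
  refine h2.trans ?_
  refine hausdorffDist_le_of_mem_dist hε.le ?_ ?_
  · intro x hx
    exact ⟨x, mem_univ x, by rw [dist_self]; exact hε.le⟩
  · intro x _
    obtain ⟨i, hi⟩ := hcover x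
    exact ⟨ψ i, hψT i, hi.le⟩

end Main

/-- Every compact metric tree is the Gromov-Hausdorff limit of a sequence of finite
metric trees. -/
theorem compact_metric_tree_ghLimit_of_finite_trees
    (X : Type) [MetricSpace X] [Nonempty X] [CompactSpace X] (hX : IsMetricTree X) :
    ∃ F : ℕ → GHSpace,
      (∀ n, ∃ (Y : Type) (m : MetricSpace Y), letI := m; ∃ (_ : Nonempty Y) (_ : CompactSpace Y),
        IsFiniteMetricTree Y ∧ toGHSpace Y = F n) ∧
      Tendsto F atTop (nhds (toGHSpace X)) := by
  have key : ∀ n : ℕ, ∃ G : GHSpace, dist G (toGHSpace X) ≤ 1 / ((n:ℝ) + 1) ∧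
      ∃ (Y : Type) (m : MetricSpace Y), letI := m;
        ∃ (_ : Nonempty Y) (_ : CompactSpace Y), IsFiniteMetricTree Y ∧ toGHSpace Y = G := by
    intro n
    have hpos : (0:ℝ) < 1 / ((n:ℝ) + 1) := by positivity
    obtain ⟨G, h1, h2⟩ := approx_lemma X hX hpos
    exact ⟨G, h1, h2⟩
  choose F h1 h2 using key
  refine ⟨F, h2, ?_⟩
  rw [tendsto_iff_dist_tendsto_zero]
  exact squeeze_zero (fun n => dist_nonneg) h1 tendsto_one_div_add_atTop_nhds_zero_nat
end

section
/- Let X be a compact metric space of covering dimension at most n and let Y be a metric 2-point identification of X. Then Y has covering dimension at most n. -/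
/-- Covering dimension at most `n`: every open cover admits an open shrinking
(refinement) of order at most `n + 1`. -/
def CovDimLE (X : Type) [TopologicalSpace X] (n : ℕ) : Prop :=
  ∀ (ι : Type) (U : ι → Set X), (∀ i, IsOpen (U i)) → (⋃ i, U i) = Set.univ →
    ∃ V : ι → Set X, (∀ i, IsOpen (V i)) ∧ (∀ i, V i ⊆ U i) ∧ (⋃ i, V i) = Set.univ ∧
      ∀ x : X, {i | x ∈ V i}.Finite ∧ {i | x ∈ V i}.ncard ≤ n + 1

/-- `f : X → Y` realizes `Y` as the metric 2-point identification of `X` at the pair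
`p ≠ q`: it is surjective, identifies exactly `p` and `q`, and `Y` carries the
quotient metric. -/
def IsMetricTwoPointIdentification {X Y : Type} [MetricSpace X] [MetricSpace Y]
    (p q : X) (f : X → Y) : Prop :=
  p ≠ q ∧ Function.Surjective f ∧ f p = f q ∧
    (∀ a b : X, f a = f b → a = b ∨ ({a, b} : Set X) = {p, q}) ∧
    ∀ a b : X, dist (f a) (f b) =
      min (dist a b) (min (dist a p + dist q b) (dist a q + dist p b))

/-!
The identification map `f : X → Y` is `1`-Lipschitz, hence a closed quotient map as `X` is
compact. Pull an open cover of `Y` back to `X` and remove the glued fibre `{p, q}` from all but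
one member `W i₀` containing it. A shrinking of order `≤ n + 1` of this cover meets `{p, q}` only
in its `i₀`-th member, so every member is saturated for `f`; their images are therefore open and
form a shrinking of the original cover with the same order.
-/

open Set Topology

theorem preimage_image_eq_of_injOn_compl {X Y : Type} {f : X → Y} {y₀ : Y}
    (hinj : InjOn f (f ⁻¹' {y₀}ᶜ)) {s : Set X}
    (hs : f ⁻¹' {y₀} ⊆ s ∨ Disjoint s (f ⁻¹' {y₀})) : f ⁻¹' (f '' s) = s := by
  refine (subset_preimage_image f s).antisymm' ?_
  rintro x ⟨a, ha, hax⟩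
  by_cases hy : f a = y₀
  · rcases hs with hs | hs
    · exact hs (show f x = y₀ from hax ▸ hy)
    · exact absurd hy (disjoint_left.1 hs ha)
  · have hx : f x ≠ y₀ := hax ▸ hy
    exact hinj hx hy hax.symm ▸ ha

section CoveringDimension

variable {X Y : Type} [TopologicalSpace X] [TopologicalSpace Y] {n : ℕ}

theorem CovDimLE.exists_shrinking_isolating (hX : CovDimLE X n) {ι : Type} {W : ι → Set X}
    (hW : ∀ i, IsOpen (W i)) (hcover : ⋃ i, W i = univ) {F : Set X} (hF : IsClosed F)
    {i₀ : ι} (hFi₀ : F ⊆ W i₀) :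
    ∃ V : ι → Set X, (∀ i, IsOpen (V i)) ∧ (∀ i, V i ⊆ W i) ∧ (⋃ i, V i) = univ ∧
      (∀ x, {i | x ∈ V i}.Finite ∧ {i | x ∈ V i}.ncard ≤ n + 1) ∧
      F ⊆ V i₀ ∧ ∀ i ≠ i₀, Disjoint (V i) F := by
  classical
  set W' : ι → Set X := fun i => if i = i₀ then W i₀ else W i \ F
  have hW'open : ∀ i, IsOpen (W' i) := fun i => by
    by_cases h : i = i₀
    · simpa [W', h] using hW i₀
    · simpa [W', h] using (hW i).sdiff hF
  have hW'cover : ⋃ i, W' i = univ := by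
    refine eq_univ_of_forall fun x => mem_iUnion.2 ?_
    by_cases hx : x ∈ F
    · exact ⟨i₀, by simpa [W'] using hFi₀ hx⟩
    · obtain ⟨i, hi⟩ := mem_iUnion.1 (hcover ▸ mem_univ x)
      by_cases h : i = i₀
      · exact ⟨i, by simpa [W', h] using h ▸ hi⟩
      · exact ⟨i, by simpa [W', h] using ⟨hi, hx⟩⟩
  obtain ⟨V, hVopen, hVsub, hVcover, hVord⟩ := hX ι W' hW'open hW'cover
  have hdisj : ∀ i ≠ i₀, Disjoint (V i) F := fun i h =>
    disjoint_left.2 fun x hx hxF => by simpa [W', h, hxF] using hVsub i hx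
  have hFV : F ⊆ V i₀ := fun x hx => by
    obtain ⟨i, hi⟩ := mem_iUnion.1 (hVcover ▸ mem_univ x)
    obtain rfl : i = i₀ := by_contra fun h => disjoint_left.1 (hdisj i h) hi hx
    exact hi
  refine ⟨V, hVopen, fun i => (hVsub i).trans ?_, hVcover, hVord, hFV, hdisj⟩
  by_cases h : i = i₀ <;> simp [W', h]

theorem CovDimLE.of_isQuotientMap {f : X → Y} (hf : IsQuotientMap f) {y₀ : Y}
    (hy₀ : IsClosed ({y₀} : Set Y)) (hinj : InjOn f (f ⁻¹' {y₀}ᶜ)) (hX : CovDimLE X n) :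
    CovDimLE Y n := by
  intro ι U hU hcover
  obtain ⟨i₀, hi₀⟩ := mem_iUnion.1 (hcover ▸ mem_univ y₀)
  obtain ⟨V, hVopen, hVsub, hVcover, hVord, hFV, hdisj⟩ :=
    hX.exists_shrinking_isolating (fun i => (hU i).preimage hf.continuous)
      (by rw [← preimage_iUnion, hcover, preimage_univ]) (hy₀.preimage hf.continuous)
      (i₀ := i₀) (preimage_mono (singleton_subset_iff.2 hi₀))
  have hsat : ∀ i, f ⁻¹' (f '' V i) = V i := fun i => by
    refine preimage_image_eq_of_injOn_compl hinj ?_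
    by_cases h : i = i₀
    · exact .inl (h ▸ hFV)
    · exact .inr (hdisj i h)
  refine ⟨fun i => f '' V i, fun i => ?_, fun i => image_subset_iff.2 (hVsub i), ?_, ?_⟩
  · exact hf.isOpen_preimage.1 ((hsat i).symm ▸ hVopen i)
  · rw [← image_iUnion, hVcover, image_univ_of_surjective hf.surjective]
  · intro y
    obtain ⟨x, rfl⟩ := hf.surjective y
    have hfib : {i | f x ∈ f '' V i} = {i | x ∈ V i} := by
      ext i
      rw [mem_ofPred_eq, ← mem_preimage, hsat]
      rfl
    exact hfib ▸ hVord x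

end CoveringDimension

namespace IsMetricTwoPointIdentification

variable {X Y : Type} [MetricSpace X] [MetricSpace Y] {p q : X} {f : X → Y}

theorem lipschitzWith (hf : IsMetricTwoPointIdentification p q f) : LipschitzWith 1 f := by
  obtain ⟨-, -, -, -, hdist⟩ := hf
  refine .of_dist_le_mul fun a b => ?_
  rw [hdist a b, NNReal.coe_one, one_mul]
  exact min_le_left _ _

theorem isQuotientMap [CompactSpace X] (hf : IsMetricTwoPointIdentification p q f) :
    IsQuotientMap f :=
  hf.lipschitzWith.continuous.isClosedMap.isQuotientMap hf.lipschitzWith.continuous hf.2.1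

theorem injOn (hf : IsMetricTwoPointIdentification p q f) : InjOn f (f ⁻¹' {f p}ᶜ) := by
  obtain ⟨-, -, hfpq, hfiber, -⟩ := hf
  intro a ha b _ hab
  refine (hfiber a b hab).resolve_right fun hpair => ha ?_
  rcases pair_eq_pair_iff.1 hpair with ⟨rfl, -⟩ | ⟨rfl, -⟩
  · rfl
  · exact hfpq.symm

end IsMetricTwoPointIdentification

/-- A metric 2-point identification of a compact metric space of covering dimension
at most `n` has covering dimension at most `n`. -/
theorem covDim_le_of_metric_two_point_identification
    (X Y : Type) [MetricSpace X] [MetricSpace Y] [CompactSpace X]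
    (n : ℕ) (hX : CovDimLE X n) (p q : X) (f : X → Y)
    (hf : IsMetricTwoPointIdentification p q f) :
    CovDimLE Y n :=
  CovDimLE.of_isQuotientMap hf.isQuotientMap isClosed_singleton hf.injOn hX
end
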